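/- arXiv:0808.3244 — 10 statements merged into one kernel-verified Lean document; each statement's English description precedes it below -/
import Mathlib

section
/- If a set system (E, F) is a convex geometry, then it satisfies the chain property: for all X, Y ∈ F with X ⊂ Y, there exists y ∈ Y − X such that Y − {y} ∈ F. -/
open scoped Classical

variable {E : Type*}

/-- A set system is accessible if every nonempty feasible set has a removable element. -/
def Accessible [DecidableEq E] (F : Set (Finset E)) : Prop :=
  ∀ X ∈ F, X ≠ ∅ → ∃ x ∈ X, X.erase x ∈ F

/-- A set system is up-accessible if every feasible set other than the ground set can be grown. -/
def UpAccessible [Fintype E] [DecidableEq E] (F : Set (Finset E)) : Prop :=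
  ∀ X ∈ F, X ≠ Finset.univ → ∃ x ∈ Finset.univ \ X, insert x X ∈ F

/-- The complement set system. -/
def ComplSys [Fintype E] [DecidableEq E] (F : Set (Finset E)) : Set (Finset E) :=
  {X | Xᶜ ∈ F}

/-- The chain property. -/
def ChainProp [DecidableEq E] (F : Set (Finset E)) : Prop :=
  ∀ X ∈ F, ∀ Y ∈ F, X ⊂ Y → ∃ y ∈ Y \ X, Y.erase y ∈ F

/-- The set of extreme points of `X`. -/
noncomputable def exF [DecidableEq E] (F : Set (Finset E)) (X : Finset E) : Finset E :=
  @Finset.filter _ (fun x => X.erase x ∈ F) (Classical.decPred _) X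

/-- The heritage property of the extreme point operator. -/
def Heritage [DecidableEq E] (F : Set (Finset E)) : Prop :=
  ∀ X ∈ F, ∀ Y ∈ F, X ⊆ Y → exF F Y ∩ X ⊆ exF F X

/-- `Z` is a cover of `S`: a minimal feasible set containing `S`. -/
def IsCover (F : Set (Finset E)) (S Z : Finset E) : Prop :=
  Z ∈ F ∧ S ⊆ Z ∧ ∀ W ∈ F, S ⊆ W → W ⊆ Z → W = Z

/-- A convex geometry. -/
def ConvexGeometry [Fintype E] [DecidableEq E] (F : Set (Finset E)) : Prop :=
  ∅ ∈ F ∧ Finset.univ ∈ F ∧ (∀ X ∈ F, ∀ Y ∈ F, X ∩ Y ∈ F) ∧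
    (∀ X ∈ F, X ≠ Finset.univ → ∃ x ∈ Finset.univ \ X, insert x X ∈ F)

/-- Quasi-concavity with respect to covers. -/
def QuasiConcave [DecidableEq E] (F : Set (Finset E)) (f : Finset E → ℝ) : Prop :=
  ∀ X ∈ F, ∀ Y ∈ F, ∀ Z, IsCover F (X ∪ Y) Z → min (f X) (f Y) ≤ f Z

/-- Monotone linkage function. -/
def MonotoneLinkage (π : E → Finset E → ℝ) : Prop :=
  ∀ x : E, ∀ X Y : Finset E, X ⊆ Y → π x X ≤ π x Y

/-- The nonempty members of `F`. -/
def Fplus (F : Set (Finset E)) : Set (Finset E) := {X ∈ F | X ≠ ∅}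

/-- The linkage function associated with a set function `f` on the family `F`. -/
noncomputable def piF (F : Set (Finset E)) (f : Finset E → ℝ) (x : E) (X : Finset E) : ℝ :=
  if x ∈ X ∧ {A | A ∈ F ∧ x ∈ A ∧ A ⊆ X}.Nonempty
  then sSup (f '' {A | A ∈ F ∧ x ∈ A ∧ A ⊆ X})
  else sInf (f '' F)

/-- `G_F(X)`: the minimum of `π_F(x, X)` over extreme points `x` of `X`,
where `π_F` is built from the nonempty members of `F`. -/
noncomputable def GF [DecidableEq E] (F : Set (Finset E)) (f : Finset E → ℝ)
    (X : Finset E) : ℝ :=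
  sInf ((fun x => piF (Fplus F) f x X) '' ↑(exF F X))

/-- `F_π(X)`: the minimum of `π(x, X)` over extreme points `x` of `X`. -/
noncomputable def Fpi [DecidableEq E] (F : Set (Finset E)) (π : E → Finset E → ℝ)
    (X : Finset E) : ℝ :=
  sInf ((fun x => π x X) '' ↑(exF F X))

theorem stmt3 [Fintype E] [DecidableEq E] (F : Set (Finset E))
    (h : ConvexGeometry F) : ChainProp F := by
  obtain ⟨-, -, hinter, hup⟩ := h
  intro X hX Y hY hXY
  -- key induction: grow a feasible Z ⊇ X until Z ∩ Y = Y
  suffices key : ∀ n : ℕ, ∀ Z ∈ F, X ⊆ Z → Z ∩ Y ⊂ Y → (Finset.univ \ Z).card ≤ n →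
      ∃ y ∈ Y \ X, Y.erase y ∈ F by
    refine key (Finset.univ \ X).card X hX (subset_refl _) ?_ le_rfl
    rw [Finset.inter_eq_left.mpr hXY.subset]
    exact hXY
  intro n
  induction n with
  | zero =>
    intro Z hZ hXZ hZY hcard
    exfalso
    have hZuniv : Z = Finset.univ := by
      have : Finset.univ \ Z = ∅ := Finset.card_eq_zero.mp (Nat.le_zero.mp hcard)
      have := Finset.sdiff_eq_empty_iff_subset.mp this
      exact Finset.eq_univ_iff_forall.mpr fun x => this (Finset.mem_univ x)
    rw [hZuniv, Finset.univ_inter] at hZY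
    exact (lt_irrefl _ hZY)
  | succ n ih =>
    intro Z hZ hXZ hZY hcard
    have hZne : Z ≠ Finset.univ := by
      intro hc
      rw [hc, Finset.univ_inter] at hZY
      exact lt_irrefl _ hZY
    obtain ⟨x, hxmem, hins⟩ := hup Z hZ hZne
    have hxZ : x ∉ Z := (Finset.mem_sdiff.mp hxmem).2
    by_cases hY' : (insert x Z) ∩ Y = Y
    · -- then Y ⊆ insert x Z, and Y \ Z = {x}
      have hYsub : Y ⊆ insert x Z := by
        intro y hy
        have : y ∈ (insert x Z) ∩ Y := by rw [hY']; exact hy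
        exact (Finset.mem_inter.mp this).1
      have hxY : x ∈ Y := by
        by_contra hxY
        have : Y ⊆ Z := fun y hy => by
          rcases Finset.mem_insert.mp (hYsub hy) with h1 | h1
          · exact absurd (h1 ▸ hy) hxY
          · exact h1
        have : Z ∩ Y = Y := Finset.inter_eq_right.mpr this
        rw [this] at hZY
        exact lt_irrefl _ hZY
      have hxX : x ∉ X := fun hc => hxZ (hXZ hc)
      refine ⟨x, Finset.mem_sdiff.mpr ⟨hxY, hxX⟩, ?_⟩
      have herase : Y.erase x = Z ∩ Y := by
        ext y
        simp only [Finset.mem_erase, Finset.mem_inter]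
        constructor
        · rintro ⟨hyx, hyY⟩
          refine ⟨?_, hyY⟩
          rcases Finset.mem_insert.mp (hYsub hyY) with h1 | h1
          · exact absurd h1 hyx
          · exact h1
        · rintro ⟨hyZ, hyY⟩
          exact ⟨fun hc => hxZ (hc ▸ hyZ), hyY⟩
      rw [herase]
      exact hinter Z hZ Y hY
    · refine ih (insert x Z) hins (hXZ.trans (Finset.subset_insert _ _)) ?_ ?_
      · exact lt_of_le_of_ne (Finset.inter_subset_right) hY'
      · have : Finset.univ \ insert x Z = (Finset.univ \ Z).erase x := by
          ext y
          simp only [Finset.mem_sdiff, Finset.mem_erase, Finset.mem_insert, Finset.mem_univ,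
            true_and]
          tauto
        rw [this]
        have hx : x ∈ Finset.univ \ Z := Finset.mem_sdiff.mpr ⟨Finset.mem_univ x, hxZ⟩
        have := Finset.card_erase_of_mem hx
        omega
end

section
/- If a set system (E, F) is a convex geometry, then the extreme point operator ex satisfies the heritage property: for all X, Y ∈ F with X ⊆ Y, ex(Y) ∩ X ⊆ ex(X). -/
open scoped Classical

variable {E : Type*}

theorem stmt4 [Fintype E] [DecidableEq E] (F : Set (Finset E))
    (h : ConvexGeometry F) : Heritage F := by
  intro X hX Y hY hXY z hz
  simp only [Finset.mem_inter, exF, Finset.mem_filter] at hz ⊢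
  obtain ⟨⟨hzY, hYe⟩, hzX⟩ := hz
  refine ⟨hzX, ?_⟩
  have hmem : X ∩ Y.erase z ∈ F := h.2.2.1 X hX _ hYe
  have : X ∩ Y.erase z = X.erase z := by
    ext a
    simp only [Finset.mem_inter, Finset.mem_erase]
    exact ⟨fun ⟨h1, h2, _⟩ => ⟨h2, h1⟩, fun ⟨h1, h2⟩ => ⟨h2, h1, hXY h2⟩⟩
  rwa [this] at hmem
end

section
/- Let (E, F) be a set system with ∅ ∈ F and E ∈ F, satisfying the chain property, and such that the extreme point operator ex satisfies the heritage property. Then F is closed under pairwise intersection, i.e., X, Y ∈ F implies X ∩ Y ∈ F. -/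
open scoped Classical

variable {E : Type*}

theorem stmt5 [Fintype E] [DecidableEq E] (F : Set (Finset E))
    (hempty : ∅ ∈ F) (huniv : Finset.univ ∈ F)
    (hchain : ChainProp F) (hher : Heritage F) :
    ∀ X ∈ F, ∀ Y ∈ F, X ∩ Y ∈ F := by
  have key : ∀ n : ℕ, ∀ X ∈ F, X.card ≤ n → ∀ Y ∈ F, X ∩ Y ∈ F := by
    intro n
    induction n with
    | zero =>
      intro X hX hc Y hY
      have hx0 : X = ∅ := Finset.card_eq_zero.mp (Nat.le_zero.mp hc)
      subst hx0; simpa using hempty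
    | succ n ih =>
      intro X hX hc Y hY
      by_cases hXY : X ⊆ Y
      · rwa [Finset.inter_eq_left.mpr hXY]
      · have hPex : ∃ k, ∃ Z ∈ F, X ∪ Y ⊆ Z ∧ Z.card = k :=
          ⟨Finset.univ.card, Finset.univ, huniv, Finset.subset_univ _, rfl⟩
        obtain ⟨Z, hZF, hXYZ, hZcard⟩ := Nat.find_spec hPex
        have hmin : ∀ W ∈ F, X ∪ Y ⊆ W → Nat.find hPex ≤ W.card := by
          intro W hW hsub
          exact Nat.find_le ⟨W, hW, hsub, rfl⟩
        have hXZ : X ⊆ Z := (Finset.union_subset_iff.mp hXYZ).1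
        have hYZ : Y ⊆ Z := (Finset.union_subset_iff.mp hXYZ).2
        have hYneZ : Y ≠ Z := by
          rintro rfl; exact hXY hXZ
        obtain ⟨z, hz, hZez⟩ := hchain Y hY Z hZF (ssubset_of_subset_of_ne hYZ hYneZ)
        have hzZ : z ∈ Z := (Finset.mem_sdiff.mp hz).1
        have hzY : z ∉ Y := (Finset.mem_sdiff.mp hz).2
        have hcardlt : (Z.erase z).card < Nat.find hPex := by
          have hpos : 0 < Z.card := Finset.card_pos.mpr ⟨z, hzZ⟩
          rw [Finset.card_erase_of_mem hzZ]
          omega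
        have hnsub : ¬ (X ∪ Y ⊆ Z.erase z) := fun h =>
          absurd (hmin _ hZez h) (not_le.mpr hcardlt)
        have hzX : z ∈ X := by
          by_contra hzX
          apply hnsub
          apply Finset.union_subset
          · intro a ha
            exact Finset.mem_erase.mpr ⟨fun h => hzX (h ▸ ha), hXZ ha⟩
          · intro a ha
            exact Finset.mem_erase.mpr ⟨fun h => hzY (h ▸ ha), hYZ ha⟩
        have hzexZ : z ∈ exF F Z := by
          unfold exF
          rw [Finset.mem_filter]
          exact ⟨hzZ, hZez⟩
        have hzexX : z ∈ exF F X := hher X hX Z hZF hXZ (Finset.mem_inter.mpr ⟨hzexZ, hzX⟩)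
        have hXez : X.erase z ∈ F := by
          unfold exF at hzexX
          exact (Finset.mem_filter.mp hzexX).2
        have hcard' : (X.erase z).card ≤ n := by
          rw [Finset.card_erase_of_mem hzX]
          omega
        have hind : (X.erase z) ∩ Y ∈ F := ih (X.erase z) hXez hcard' Y hY
        have heq : X ∩ Y = (X.erase z) ∩ Y := by
          ext a
          simp only [Finset.mem_inter, Finset.mem_erase]
          constructor
          · rintro ⟨haX, haY⟩
            exact ⟨⟨fun h => hzY (h ▸ haY), haX⟩, haY⟩
          · rintro ⟨⟨_, haX⟩, haY⟩
            exact ⟨haX, haY⟩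
        rw [heq]
        exact hind
  intro X hX Y hY
  exact key X.card X hX le_rfl Y hY
end

section
/- A set system (E, F) is a convex geometry if and only if: (1) ∅ ∈ F and E ∈ F; (2) (E, F) satisfies the chain property; and (3) the extreme point operator ex satisfies the heritage property. -/
open scoped Classical

variable {E : Type*}

lemma mem_exF_iff [DecidableEq E] {F : Set (Finset E)} {X : Finset E} {x : E} :
    x ∈ exF F X ↔ x ∈ X ∧ X.erase x ∈ F := by
  simp [exF, Finset.mem_filter]

/-- From the chain property, feasible sets can be augmented inside feasible supersets. -/
lemma chain_augment [DecidableEq E] {F : Set (Finset E)} (hchain : ChainProp F) :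
    ∀ n : ℕ, ∀ X ∈ F, ∀ Y ∈ F, X ⊂ Y → (Y \ X).card ≤ n →
      ∃ x ∈ Y \ X, insert x X ∈ F := by
  intro n
  induction n with
  | zero =>
    intro X hX Y hY hXY hcard
    obtain ⟨z, hzY, hzX⟩ := Finset.exists_of_ssubset hXY
    exact absurd (Finset.card_eq_zero.mp (Nat.le_zero.mp hcard))
      (Finset.ne_empty_of_mem (Finset.mem_sdiff.mpr ⟨hzY, hzX⟩))
  | succ n ih =>
    intro X hX Y hY hXY hcard
    obtain ⟨y, hySd, hYe⟩ := hchain X hX Y hY hXY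
    rw [Finset.mem_sdiff] at hySd
    by_cases h : Y.erase y = X
    · refine ⟨y, Finset.mem_sdiff.mpr hySd, ?_⟩
      rw [← h, Finset.insert_erase hySd.1]
      exact hY
    · have hsub : X ⊆ Y.erase y := fun a ha =>
        Finset.mem_erase.mpr ⟨fun he => hySd.2 (he ▸ ha), hXY.1 ha⟩
      have hss : X ⊂ Y.erase y := hsub.ssubset_of_ne (fun he => h he.symm)
      have hkey : Y.erase y \ X = (Y \ X).erase y := by
        ext a; simp [Finset.mem_erase, Finset.mem_sdiff]; tauto
      have hcard' : (Y.erase y \ X).card ≤ n := by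
        rw [hkey]
        have := Finset.card_erase_of_mem (Finset.mem_sdiff.mpr hySd)
        omega
      obtain ⟨x, hx, hins⟩ := ih X hX _ hYe hss hcard'
      rw [Finset.mem_sdiff, Finset.mem_erase] at hx
      exact ⟨x, Finset.mem_sdiff.mpr ⟨hx.1.2, hx.2⟩, hins⟩

/-- From chain + heritage (plus univ ∈ F), F is closed under intersections. -/
lemma chain_heritage_inter [Fintype E] [DecidableEq E] {F : Set (Finset E)}
    (hu : Finset.univ ∈ F) (hchain : ChainProp F) (her : Heritage F) :
    ∀ n : ℕ, ∀ X ∈ F, ∀ Y ∈ F, (Finset.univ \ Y).card ≤ n → X ∩ Y ∈ F := by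
  intro n
  induction n with
  | zero =>
    intro X hX Y hY hcard
    have : Y = Finset.univ := by
      have := Finset.card_eq_zero.mp (Nat.le_zero.mp hcard)
      have : ∀ a : E, a ∈ Y := by
        intro a
        by_contra ha
        exact Finset.ne_empty_of_mem
          (Finset.mem_sdiff.mpr ⟨Finset.mem_univ a, ha⟩) this
      exact Finset.eq_univ_iff_forall.mpr this
    rw [this, Finset.inter_univ]; exact hX
  | succ n ih =>
    intro X hX Y hY hcard
    by_cases hYu : Y = Finset.univ
    · rw [hYu, Finset.inter_univ]; exact hX
    · have hss : Y ⊂ Finset.univ :=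
        (Finset.subset_univ Y).ssubset_of_ne hYu
      obtain ⟨y, hySd, hins⟩ := chain_augment hchain (Finset.univ \ Y).card
        Y hY Finset.univ hu hss le_rfl
      rw [Finset.mem_sdiff] at hySd
      have hyY : y ∉ Y := hySd.2
      have hcard' : (Finset.univ \ insert y Y).card ≤ n := by
        have h1 : Finset.univ \ insert y Y = (Finset.univ \ Y).erase y := by
          ext a; simp [Finset.mem_erase, Finset.mem_sdiff, Finset.mem_insert]
        rw [h1]
        have := Finset.card_erase_of_mem
          (Finset.mem_sdiff.mpr ⟨Finset.mem_univ y, hyY⟩)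
        omega
      have hXY' : X ∩ insert y Y ∈ F := ih X hX _ hins hcard'
      by_cases hyX : y ∈ X
      · have hex : y ∈ exF F (insert y Y) := by
          rw [mem_exF_iff]
          refine ⟨Finset.mem_insert_self y Y, ?_⟩
          rw [Finset.erase_insert hyY]; exact hY
        have hmem : y ∈ exF F (insert y Y) ∩ (X ∩ insert y Y) :=
          Finset.mem_inter.mpr ⟨hex,
            Finset.mem_inter.mpr ⟨hyX, Finset.mem_insert_self y Y⟩⟩
        have := her (X ∩ insert y Y) hXY' (insert y Y) hins
          Finset.inter_subset_right hmem
        rw [mem_exF_iff] at this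
        have heq : (X ∩ insert y Y).erase y = X ∩ Y := by
          ext a
          simp only [Finset.mem_erase, Finset.mem_inter, Finset.mem_insert]
          constructor
          · rintro ⟨hne, haX, (rfl | haY)⟩
            · exact absurd rfl hne
            · exact ⟨haX, haY⟩
          · rintro ⟨haX, haY⟩
            exact ⟨fun he => hyY (he ▸ haY), haX, Or.inr haY⟩
        rw [← heq]; exact this.2
      · have heq : X ∩ insert y Y = X ∩ Y := by
          ext a
          simp only [Finset.mem_inter, Finset.mem_insert]
          constructor
          · rintro ⟨haX, (rfl | haY)⟩
            · exact absurd haX hyX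
            · exact ⟨haX, haY⟩
          · rintro ⟨haX, haY⟩; exact ⟨haX, Or.inr haY⟩
        rw [← heq]; exact hXY'

/-- In a convex geometry, feasible sets can be augmented inside feasible supersets. -/
lemma cg_augment [Fintype E] [DecidableEq E] {F : Set (Finset E)}
    (hcg : ConvexGeometry F) :
    ∀ X ∈ F, ∀ Y ∈ F, X ⊂ Y → ∃ x ∈ Y \ X, insert x X ∈ F := by
  obtain ⟨h0, hu, hint, hup⟩ := hcg
  intro X hX Y hY hXY
  suffices h : ∀ n : ℕ, ∀ Z ∈ F, Z ∩ Y = X → (Finset.univ \ Z).card ≤ n →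
      ∃ x ∈ Y \ X, insert x X ∈ F by
    exact h (Finset.univ \ X).card X hX
      (Finset.inter_eq_left.mpr hXY.1) le_rfl
  intro n
  induction n with
  | zero =>
    intro Z hZ hZY hcard
    have hZu : Z = Finset.univ := by
      have hemp := Finset.card_eq_zero.mp (Nat.le_zero.mp hcard)
      apply Finset.eq_univ_iff_forall.mpr
      intro a
      by_contra ha
      exact Finset.ne_empty_of_mem
        (Finset.mem_sdiff.mpr ⟨Finset.mem_univ a, ha⟩) hemp
    rw [hZu, Finset.univ_inter] at hZY
    exact absurd hZY hXY.ne'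
  | succ n ih =>
    intro Z hZ hZY hcard
    have hZu : Z ≠ Finset.univ := by
      intro he
      rw [he, Finset.univ_inter] at hZY
      exact hXY.ne' hZY
    obtain ⟨z, hzSd, hzins⟩ := hup Z hZ hZu
    rw [Finset.mem_sdiff] at hzSd
    have hzZ : z ∉ Z := hzSd.2
    by_cases hzY : z ∈ Y
    · refine ⟨z, Finset.mem_sdiff.mpr ⟨hzY, fun hzX => hzZ ?_⟩, ?_⟩
      · rw [← hZY] at hzX
        exact (Finset.mem_inter.mp hzX).1
      · have : insert z Z ∩ Y = insert z X := by
          rw [← hZY]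
          ext a
          simp only [Finset.mem_inter, Finset.mem_insert]
          constructor
          · rintro ⟨(rfl | haZ), haY⟩
            · exact Or.inl rfl
            · exact Or.inr ⟨haZ, haY⟩
          · rintro (rfl | ⟨h1, h2⟩)
            · exact ⟨Or.inl rfl, hzY⟩
            · exact ⟨Or.inr h1, h2⟩
        rw [← this]
        exact hint _ hzins _ hY
    · have hZY' : insert z Z ∩ Y = X := by
        rw [← hZY]
        ext a
        simp only [Finset.mem_inter, Finset.mem_insert]
        constructor
        · rintro ⟨(rfl | haZ), haY⟩
          · exact absurd haY hzY
          · exact ⟨haZ, haY⟩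
        · rintro ⟨haZ, haY⟩; exact ⟨Or.inr haZ, haY⟩
      have hcard' : (Finset.univ \ insert z Z).card ≤ n := by
        have h1 : Finset.univ \ insert z Z = (Finset.univ \ Z).erase z := by
          ext a; simp [Finset.mem_erase, Finset.mem_sdiff, Finset.mem_insert]
        rw [h1]
        have := Finset.card_erase_of_mem
          (Finset.mem_sdiff.mpr ⟨Finset.mem_univ z, hzZ⟩)
        omega
      exact ih _ hzins hZY' hcard'

theorem stmt6 [Fintype E] [DecidableEq E] (F : Set (Finset E)) :
    ConvexGeometry F ↔
      (∅ ∈ F ∧ Finset.univ ∈ F ∧ ChainProp F ∧ Heritage F) := by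
  constructor
  · intro hcg
    obtain ⟨h0, hu, hint, hup⟩ := hcg
    refine ⟨h0, hu, ?_, ?_⟩
    · -- chain property
      intro X hX Y hY hXY
      suffices h : ∀ n : ℕ, ∀ X ∈ F, X ⊂ Y → (Y \ X).card ≤ n →
          ∃ y ∈ Y \ X, Y.erase y ∈ F by
        exact h (Y \ X).card X hX hXY le_rfl
      intro n
      induction n with
      | zero =>
        intro X hX hXY hcard
        obtain ⟨z, hzY, hzX⟩ := Finset.exists_of_ssubset hXY
        exact absurd (Finset.card_eq_zero.mp (Nat.le_zero.mp hcard))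
          (Finset.ne_empty_of_mem (Finset.mem_sdiff.mpr ⟨hzY, hzX⟩))
      | succ n ih =>
        intro X hX hXY hcard
        obtain ⟨x, hxSd, hins⟩ := cg_augment ⟨h0, hu, hint, hup⟩ X hX Y hY hXY
        rw [Finset.mem_sdiff] at hxSd
        by_cases h : insert x X = Y
        · refine ⟨x, Finset.mem_sdiff.mpr hxSd, ?_⟩
          rw [← h, Finset.erase_insert hxSd.2]
          exact hX
        · have hss : insert x X ⊂ Y :=
            (Finset.insert_subset hxSd.1 hXY.1).ssubset_of_ne h
          have hcard' : (Y \ insert x X).card ≤ n := by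
            have h1 : Y \ insert x X = (Y \ X).erase x := by
              ext a; simp [Finset.mem_erase, Finset.mem_sdiff, Finset.mem_insert]; tauto
            rw [h1]
            have := Finset.card_erase_of_mem (Finset.mem_sdiff.mpr hxSd)
            omega
          obtain ⟨y, hySd, hYe⟩ := ih _ hins hss hcard'
          rw [Finset.mem_sdiff, Finset.mem_insert] at hySd
          exact ⟨y, Finset.mem_sdiff.mpr ⟨hySd.1, fun hyX => hySd.2 (Or.inr hyX)⟩, hYe⟩
    · -- heritage
      intro X hX Y hY hXY x hx
      rw [Finset.mem_inter, mem_exF_iff] at hx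
      obtain ⟨⟨hxY, hYe⟩, hxX⟩ := hx
      rw [mem_exF_iff]
      refine ⟨hxX, ?_⟩
      have : X.erase x = X ∩ Y.erase x := by
        ext a
        simp only [Finset.mem_erase, Finset.mem_inter]
        exact ⟨fun ⟨h1, h2⟩ => ⟨h2, h1, hXY h2⟩, fun ⟨h1, h2, _⟩ => ⟨h2, h1⟩⟩
      rw [this]
      exact hint X hX _ hYe
  · rintro ⟨h0, hu, hchain, her⟩
    refine ⟨h0, hu, ?_, ?_⟩
    · intro X hX Y hY
      exact chain_heritage_inter hu hchain her (Finset.univ \ Y).card X hX Y hY le_rfl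
    · intro X hX hXu
      have hss : X ⊂ Finset.univ := (Finset.subset_univ X).ssubset_of_ne hXu
      obtain ⟨x, hx, hins⟩ := chain_augment hchain (Finset.univ \ X).card
        X hX Finset.univ hu hss le_rfl
      exact ⟨x, hx, hins⟩
end

section
/- Let (E, F) be an accessible set system satisfying the chain property. Then for every X ∈ F and every choice of sets B^x ∈ F with x ∈ B^x ⊆ X for each x ∈ ex(X), the set X is a cover of ∪_{x ∈ ex(X)} B^x, i.e., X is a minimal member of F containing ∪_{x ∈ ex(X)} B^x. -/
open scoped Classical

variable {E : Type*}

theorem stmt9 [DecidableEq E] (F : Set (Finset E)) (hacc : Accessible F)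
    (hchain : ChainProp F) :
    ∀ X ∈ F, ∀ B : E → Finset E,
      (∀ x ∈ exF F X, B x ∈ F ∧ x ∈ B x ∧ B x ⊆ X) →
      IsCover F ((exF F X).biUnion B) X := by
  intro X hX B hB
  refine ⟨hX, ?_, ?_⟩
  · intro a ha
    obtain ⟨x, hx, hax⟩ := Finset.mem_biUnion.1 ha
    exact (hB x hx).2.2 hax
  · intro W hW hSW hWX
    by_contra hne
    obtain ⟨y, hy, hery⟩ := hchain W hW X hX (ssubset_of_subset_of_ne hWX hne)
    rw [Finset.mem_sdiff] at hy
    have hyex : y ∈ exF F X := by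
      unfold exF
      rw [Finset.mem_filter]
      exact ⟨hy.1, hery⟩
    exact hy.2 (hSW (Finset.mem_biUnion.2 ⟨y, hyex, (hB y hyex).2.1⟩))
end

section
/- Let (E, F) be an accessible set system satisfying the chain property, and F : F⁺ → ℝ a quasi-concave set function. Then G_F = F on F⁺, where G_F(X) = min over x ∈ ex(X) of π_F(x, X) and π_F(x, X) = max{F(A) : A ∈ F⁺, x ∈ A ⊆ X}. -/
/-!
For every extreme point `x` of `X`, `π_F(x, X) ≥ F(X)` since `X` itself competes in the maximum,
so it suffices to find one extreme point `y` with `F(A) ≤ F(X)` whenever `y ∈ A ⊆ X`. Take a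
feasible `A ⊆ X` that is maximal among those with `F(A) > F(X)` (if there is none, any extreme
point works) and let `y ∈ X − A` be given by the chain property for `A ⊂ X`. If some feasible
`D ∋ y` inside `X` had `F(D) > F(X)`, a cover of `A ∪ D` inside `X` would, by quasi-concavity,
again have value above `F(X)` while strictly containing `A`.
-/

open scoped Classical

variable {E : Type*}

section Cover

variable {F : Set (Finset E)} {S Z : Finset E}

lemma isCover_iff_minimal : IsCover F S Z ↔ Minimal (fun W => W ∈ F ∧ S ⊆ W) Z :=
  ⟨fun ⟨hZ, hSZ, hmin⟩ => ⟨⟨hZ, hSZ⟩, fun W ⟨hW, hSW⟩ hWZ => (hmin W hW hSW hWZ).ge⟩,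
    fun ⟨⟨hZ, hSZ⟩, hmin⟩ => ⟨hZ, hSZ, fun _ hW hSW hWZ => hWZ.antisymm (hmin ⟨hW, hSW⟩ hWZ)⟩⟩

lemma exists_isCover_subset {X : Finset E} (hX : X ∈ F) (hSX : S ⊆ X) :
    ∃ Z, IsCover F S Z ∧ Z ⊆ X := by
  obtain ⟨Z, hZX, hZ⟩ :=
    exists_minimal_le_of_wellFoundedLT (fun W => W ∈ F ∧ S ⊆ W) X ⟨hX, hSX⟩
  exact ⟨Z, isCover_iff_minimal.2 hZ, hZX⟩

end Cover

section Extreme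

variable [DecidableEq E] {F : Set (Finset E)} {f : Finset E → ℝ} {X : Finset E}

lemma mem_exF {x : E} : x ∈ exF F X ↔ x ∈ X ∧ X.erase x ∈ F := by
  simp [exF]

lemma le_of_maximal_of_mem_sdiff (hqc : QuasiConcave F f) (hX : X ∈ F) {A D : Finset E}
    (hA : Maximal (fun A => A ∈ F ∧ A ⊆ X ∧ f X < f A) A) {y : E} (hy : y ∈ X \ A)
    (hD : D ∈ F) (hyD : y ∈ D) (hDX : D ⊆ X) : f D ≤ f X := by
  by_contra! hfD
  obtain ⟨hAF, hAX, hfA⟩ := hA.prop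
  obtain ⟨Z, hZ, hZX⟩ := exists_isCover_subset hX (Finset.union_subset hAX hDX)
  have hfZ : f X < f Z := (lt_min hfA hfD).trans_le (hqc A hAF D hD Z hZ)
  have hAZ : A ⊆ Z := Finset.subset_union_left.trans hZ.2.1
  have hyZ : y ∈ Z := hZ.2.1 (Finset.mem_union_right A hyD)
  exact (Finset.mem_sdiff.1 hy).2 (hA.le_of_ge ⟨hZ.1, hZX, hfZ⟩ hAZ hyZ)

lemma exists_mem_exF_forall_le (hacc : Accessible F) (hchain : ChainProp F)
    (hqc : QuasiConcave F f) (hX : X ∈ F) (hXne : X ≠ ∅) :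
    ∃ y ∈ exF F X, ∀ A ∈ F, y ∈ A → A ⊆ X → f A ≤ f X := by
  by_cases hbig : ∃ A, A ∈ F ∧ A ⊆ X ∧ f X < f A
  · obtain ⟨A, hA⟩ := ((Set.finite_Iic X).subset fun A hA => hA.2.1 :
      {A | A ∈ F ∧ A ⊆ X ∧ f X < f A}.Finite).exists_maximal hbig
    obtain ⟨hAF, hAX, hfA⟩ := hA.prop
    have hAX' : A ⊂ X := hAX.ssubset_of_ne (by rintro rfl; exact hfA.false)
    obtain ⟨y, hy, hyF⟩ := hchain A hAF X hX hAX'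
    exact ⟨y, mem_exF.2 ⟨(Finset.mem_sdiff.1 hy).1, hyF⟩,
      fun D hD hyD hDX => le_of_maximal_of_mem_sdiff hqc hX hA hy hD hyD hDX⟩
  · obtain ⟨x, hx, hxF⟩ := hacc X hX hXne
    exact ⟨x, mem_exF.2 ⟨hx, hxF⟩, fun A hA _ hAX => not_lt.1 fun hfA => hbig ⟨A, hA, hAX, hfA⟩⟩

end Extreme

section Linkage

variable {G : Set (Finset E)} {f : Finset E → ℝ} {x : E} {X : Finset E}

lemma piF_eq_sSup (hX : X ∈ G) (hx : x ∈ X) :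
    piF G f x X = sSup (f '' {A | A ∈ G ∧ x ∈ A ∧ A ⊆ X}) :=
  if_pos ⟨hx, X, hX, hx, subset_rfl⟩

lemma le_piF (hX : X ∈ G) (hx : x ∈ X) : f X ≤ piF G f x X := by
  have hfin : {A | A ∈ G ∧ x ∈ A ∧ A ⊆ X}.Finite := (Set.finite_Iic X).subset fun A hA => hA.2.2
  rw [piF_eq_sSup hX hx]
  exact le_csSup (hfin.image f).bddAbove ⟨X, ⟨hX, hx, subset_rfl⟩, rfl⟩

lemma piF_eq_of_forall_le (hX : X ∈ G) (hx : x ∈ X)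
    (h : ∀ A ∈ G, x ∈ A → A ⊆ X → f A ≤ f X) : piF G f x X = f X := by
  rw [piF_eq_sSup hX hx]
  refine IsGreatest.csSup_eq ⟨⟨X, ⟨hX, hx, subset_rfl⟩, rfl⟩, ?_⟩
  rintro _ ⟨A, ⟨hA, hxA, hAX⟩, rfl⟩
  exact h A hA hxA hAX

end Linkage

theorem stmt10 [DecidableEq E] (F : Set (Finset E)) (hacc : Accessible F)
    (hchain : ChainProp F) (f : Finset E → ℝ) (hqc : QuasiConcave F f) :
    ∀ X ∈ F, X ≠ ∅ → GF F f X = f X := by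
  intro X hX hXne
  have hX' : X ∈ Fplus F := ⟨hX, hXne⟩
  obtain ⟨y, hy, hyle⟩ := exists_mem_exF_forall_le hacc hchain hqc hX hXne
  refine IsLeast.csInf_eq ⟨⟨y, hy, ?_⟩, ?_⟩
  · exact piF_eq_of_forall_le hX' (mem_exF.1 hy).1 fun A hA => hyle A hA.1
  · rintro _ ⟨x, hx, rfl⟩
    exact le_piF hX' (mem_exF.1 hx).1
end

section
/- Let (E, F) be an accessible set system that does not satisfy the chain property. Then there exists a quasi-concave function F : F⁺ → ℝ such that G_F ≠ F, where G_F(X) = min over x ∈ ex(X) of π_F(x, X) with π_F(x, X) = max{F(A) : A ∈ F⁺, x ∈ A ⊆ X}. -/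
open scoped Classical

variable {E : Type*}

theorem stmt11 [DecidableEq E] (F : Set (Finset E)) (hacc : Accessible F)
    (hchain : ¬ ChainProp F) :
    ∃ f : Finset E → ℝ, QuasiConcave F f ∧
      ∃ X ∈ F, X ≠ ∅ ∧ GF F f X ≠ f X := by
  unfold ChainProp at hchain
  push_neg at hchain
  obtain ⟨X, hX, Y, hY, hXY, hne⟩ := hchain
  -- the witness function: indicator of {X}
  set f : Finset E → ℝ := fun A => if A = X then 1 else 0 with hfdef
  have hfge : ∀ A, (0:ℝ) ≤ f A := by intro A; simp only [hfdef]; split <;> norm_num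
  have hfle : ∀ A, f A ≤ 1 := by intro A; simp only [hfdef]; split <;> norm_num
  have hfX : f X = 1 := by simp [hfdef]
  -- Y is nonempty
  obtain ⟨z, hzY, hzX⟩ := Set.exists_of_ssubset (by exact_mod_cast hXY : (X:Set E) ⊂ Y)
  have hYne : Y ≠ ∅ := by
    intro h; rw [h] at hzY; exact absurd hzY (Finset.notMem_empty z)
  -- extreme points of Y
  have hmem : ∀ x, x ∈ exF F Y ↔ x ∈ Y ∧ Y.erase x ∈ F := by
    intro x
    unfold exF
    rw [Finset.mem_filter]
  have hsubX : ∀ x ∈ exF F Y, x ∈ X := by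
    intro x hx
    rw [hmem] at hx
    by_contra hxX
    exact hne x (Finset.mem_sdiff.2 ⟨hx.1, hxX⟩) hx.2
  obtain ⟨x0, hx0Y, hx0e⟩ := hacc Y hY hYne
  have hx0 : x0 ∈ exF F Y := (hmem x0).2 ⟨hx0Y, hx0e⟩
  have hXne : X ≠ ∅ := by
    intro h
    have := hsubX x0 hx0
    rw [h] at this
    exact Finset.notMem_empty x0 this
  -- quasi-concavity
  have hqc : QuasiConcave F f := by
    intro A hA B hB Z hZ
    by_cases hAX : A = X
    · by_cases hBX : B = X
      · rw [hAX, hBX] at hZ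
        have hZX : X = Z := by
          refine hZ.2.2 X hX (by rw [Finset.union_self]) ?_
          have := hZ.2.1; rwa [Finset.union_self] at this
        rw [← hZX, hfX]
        exact min_le_of_left_le (hfle A)
      · calc min (f A) (f B) ≤ f B := min_le_right _ _
          _ = 0 := by simp [hfdef, hBX]
          _ ≤ f Z := hfge Z
    · calc min (f A) (f B) ≤ f A := min_le_left _ _
        _ = 0 := by simp [hfdef, hAX]
        _ ≤ f Z := hfge Z
  -- pi values are all 1
  have hpi : ∀ x ∈ exF F Y, piF (Fplus F) f x Y = 1 := by
    intro x hx
    have hxY : x ∈ Y := ((hmem x).1 hx).1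
    have hxX : x ∈ X := hsubX x hx
    have hXS : X ∈ {A | A ∈ Fplus F ∧ x ∈ A ∧ A ⊆ Y} :=
      ⟨⟨hX, hXne⟩, hxX, hXY.subset⟩
    unfold piF
    rw [if_pos ⟨hxY, ⟨X, hXS⟩⟩]
    apply IsGreatest.csSup_eq
    constructor
    · exact ⟨X, hXS, hfX⟩
    · rintro y ⟨A, hA, rfl⟩
      exact hfle A
  have himg : ((fun x => piF (Fplus F) f x Y) '' ↑(exF F Y)) = {1} := by
    apply Set.Subset.antisymm
    · rintro y ⟨x, hx, rfl⟩
      exact hpi x (by exact_mod_cast hx)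
    · rintro y hy
      rw [Set.mem_singleton_iff] at hy
      subst hy
      exact ⟨x0, by exact_mod_cast hx0, hpi x0 hx0⟩
  refine ⟨f, hqc, Y, hY, hYne, ?_⟩
  rw [GF, himg, csInf_singleton]
  have hYX : Y ≠ X := hXY.ne'
  simp [hfdef, hYX]
end

section
/- Let (E, F) be an accessible set system whose extreme point operator ex satisfies the heritage property. Then for every monotone linkage function π : E × 2^E → ℝ, the function F_π(X) = min over x ∈ ex(X) of π(x, X) (for nonempty X ∈ F) is quasi-concave: for all nonempty X, Y ∈ F and every cover Z of X ∪ Y, F_π(Z) ≥ min{F_π(X), F_π(Y)}. -/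
open scoped Classical

variable {E : Type*}

theorem stmt12 [DecidableEq E] (F : Set (Finset E)) (hacc : Accessible F)
    (hher : Heritage F) (π : E → Finset E → ℝ) (hπ : MonotoneLinkage π) :
    ∀ X ∈ F, X ≠ ∅ → ∀ Y ∈ F, Y ≠ ∅ → ∀ Z, IsCover F (X ∪ Y) Z →
      min (Fpi F π X) (Fpi F π Y) ≤ Fpi F π Z := by
  intro X hX hXne Y hY hYne Z hZ
  obtain ⟨hZF, hsub, hmin⟩ := hZ
  have hXZ : X ⊆ Z := (Finset.union_subset_iff.mp hsub).1
  have hYZ : Y ⊆ Z := (Finset.union_subset_iff.mp hsub).2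
  have hZne : Z ≠ ∅ := by
    intro h
    exact hXne (Finset.subset_empty.mp (h ▸ hXZ))
  obtain ⟨z, hzZ, hz⟩ := hacc Z hZF hZne
  have hexZ : ((fun x => π x Z) '' ↑(exF F Z)).Nonempty :=
    ⟨π z Z, z, by simp [exF, hzZ, hz], rfl⟩
  apply le_csInf hexZ
  rintro b ⟨x, hx, rfl⟩
  have hxZ : x ∈ Z ∧ Z.erase x ∈ F := by simpa [exF] using hx
  have hxXY : x ∈ X ∪ Y := by
    by_contra hnx
    have h1 : X ∪ Y ⊆ Z.erase x :=
      Finset.subset_erase.mpr ⟨hsub, fun h => hnx h⟩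
    have h2 := hmin _ hxZ.2 h1 (Finset.erase_subset _ _)
    exact Finset.erase_eq_self.mp h2 hxZ.1
  have key : ∀ W : Finset E, W ∈ F → W ⊆ Z → x ∈ W → Fpi F π W ≤ π x Z := by
    intro W hW hWZ hxW
    have hxex : x ∈ exF F W := by
      apply hher W hW Z hZF hWZ
      simp only [Finset.mem_inter]
      refine ⟨?_, hxW⟩
      simp [exF, hxZ.1, hxZ.2]
    have h1 : Fpi F π W ≤ π x W := by
      apply csInf_le
      · exact (Set.Finite.image _ (exF F W).finite_toSet).bddBelow
      · exact ⟨x, by simpa using hxex, rfl⟩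
    exact h1.trans (hπ x W Z hWZ)
  rcases Finset.mem_union.mp hxXY with h | h
  · exact le_trans (min_le_left _ _) (key X hX hXZ h)
  · exact le_trans (min_le_right _ _) (key Y hY hYZ h)
end

section
/- Let (E, F) be an accessible set system whose extreme point operator does not satisfy the heritage property. Then there exists a monotone linkage function π such that F_π(X) = min over x ∈ ex(X) of π(x, X) is not quasi-concave. -/
open scoped Classical

variable {E : Type*}

theorem stmt13 [DecidableEq E] (F : Set (Finset E)) (hacc : Accessible F)
    (hher : ¬ Heritage F) :
    ∃ π : E → Finset E → ℝ, MonotoneLinkage π ∧ ¬ QuasiConcave F (Fpi F π) := by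
  rw [Heritage] at hher
  push_neg at hher
  obtain ⟨A, hA, B, hB, hAB, hnot⟩ := hher
  rw [Finset.not_subset] at hnot
  obtain ⟨x, hxmem, hxnot⟩ := hnot
  rw [Finset.mem_inter] at hxmem
  obtain ⟨hxB, hxA⟩ := hxmem
  have hxB' : x ∈ B ∧ B.erase x ∈ F := by
    simpa [exF, Finset.mem_filter] using hxB
  have hAneB : A ≠ B := by
    rintro rfl
    exact hxnot hxB
  obtain ⟨y, hyB, hyA⟩ := Finset.exists_of_ssubset (hAB.ssubset_of_ne hAneB)
  set π : E → Finset E → ℝ := fun z _ => if z = x then 0 else 1 with hπ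
  refine ⟨π, fun z X Y _ => le_refl _, ?_⟩
  intro hqc
  have hXF : B.erase x ∈ F := hxB'.2
  have hunion : B.erase x ∪ A = B := by
    apply Finset.Subset.antisymm
    · exact Finset.union_subset (Finset.erase_subset _ _) hAB
    · intro z hz
      by_cases hzx : z = x
      · exact Finset.mem_union_right _ (hzx ▸ hxA)
      · exact Finset.mem_union_left _ (Finset.mem_erase.mpr ⟨hzx, hz⟩)
  have hcover : IsCover F (B.erase x ∪ A) B := by
    rw [hunion]
    exact ⟨hB, le_refl _, fun W _ hBW hWB => Finset.Subset.antisymm hWB hBW⟩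
  have key := hqc (B.erase x) hXF A hA B hcover
  have hbound : ∀ S : Finset E, (exF F S).Nonempty → x ∉ exF F S →
      (1:ℝ) ≤ Fpi F π S := by
    intro S hne hxS
    apply le_csInf
    · exact (Finset.coe_nonempty.mpr hne).image _
    · rintro r ⟨z, hz, rfl⟩
      have hzS : z ∈ exF F S := by simpa using hz
      have hzx : z ≠ x := fun h => hxS (h ▸ hzS)
      simp [hπ, hzx]
  -- extreme points of A
  have hAne : (exF F A).Nonempty := by
    obtain ⟨a, haA, haF⟩ := hacc A hA (Finset.ne_empty_of_mem hxA)
    exact ⟨a, by simp [exF, Finset.mem_filter, haA, haF]⟩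
  -- extreme points of B.erase x
  have hyx : y ≠ x := fun h => hyA (h ▸ hxA)
  have hyBx : y ∈ B.erase x := Finset.mem_erase.mpr ⟨hyx, hyB⟩
  have hBxne : (exF F (B.erase x)).Nonempty := by
    obtain ⟨a, haA, haF⟩ := hacc _ hXF (Finset.ne_empty_of_mem hyBx)
    exact ⟨a, by simp [exF, Finset.mem_filter, haA, haF]⟩
  have hxnotBx : x ∉ exF F (B.erase x) := by
    simp [exF, Finset.mem_filter]
  have h1 : (1:ℝ) ≤ Fpi F π (B.erase x) := hbound _ hBxne hxnotBx
  have h2 : (1:ℝ) ≤ Fpi F π A := hbound _ hAne hxnot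
  have hFB : Fpi F π B ≤ 0 := by
    apply csInf_le
    · refine ⟨0, ?_⟩
      rintro r ⟨z, hz, rfl⟩
      by_cases h : z = x <;> simp [hπ, h]
    · exact ⟨x, by simpa using hxB, by simp [hπ]⟩
  have := le_trans (le_min h1 h2) key
  unfold Fpi at this hFB
  linarith
end

section
/- Let (E, F) be an accessible set system whose extreme point operator satisfies the heritage property, π a monotone linkage function, and F_π(X) = min over x ∈ ex(X) of π(x, X). Then the induced linkage function π_{F_π} satisfies π_{F_π}(x, X) ≤ π(x, X) for all X ∈ F and x ∈ ex(X), where π_{F_π}(x, X) = max{F_π(A) : A ∈ F⁺, x ∈ A ⊆ X}. -/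
open scoped Classical

variable {E : Type*}

theorem stmt15 [DecidableEq E] (F : Set (Finset E)) (hacc : Accessible F)
    (hher : Heritage F) (π : E → Finset E → ℝ) (hπ : MonotoneLinkage π) :
    ∀ X ∈ F, ∀ x ∈ exF F X, piF (Fplus F) (Fpi F π) x X ≤ π x X := by
  intro X hX x hx
  have hxX : x ∈ X ∧ X.erase x ∈ F := by
    simpa [exF, Finset.mem_filter] using hx
  have hXin : X ∈ {A | A ∈ Fplus F ∧ x ∈ A ∧ A ⊆ X} :=
    ⟨⟨hX, Finset.ne_empty_of_mem hxX.1⟩, hxX.1, subset_rfl⟩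
  have hne : {A | A ∈ Fplus F ∧ x ∈ A ∧ A ⊆ X}.Nonempty := ⟨X, hXin⟩
  rw [piF, if_pos ⟨hxX.1, hne⟩]
  apply csSup_le (hne.image _)
  rintro r ⟨A, ⟨⟨hAF, hAne⟩, hxA, hAX⟩, rfl⟩
  -- x is an extreme point of A by heritage
  have hxA' : x ∈ exF F A := hher A hAF X hX hAX (Finset.mem_inter.mpr ⟨hx, hxA⟩)
  have hmem : π x A ∈ (fun y => π y A) '' ↑(exF F A) := ⟨x, by simpa using hxA', rfl⟩
  have hbdd : BddBelow ((fun y => π y A) '' ↑(exF F A)) :=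
    (Set.Finite.image _ (exF F A).finite_toSet).bddBelow
  calc Fpi F π A ≤ π x A := csInf_le hbdd hmem
    _ ≤ π x X := hπ x A X hAX
end
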